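/- arXiv:0704.0708 — 2 statements merged into one kernel-verified Lean document; each statement's English description precedes it below -/
import Mathlib

section
/- Let u, v : ℝ^d → ℝ be twice continuously differentiable, let h₁ : ℝ^d → ℝ^d be twice continuously differentiable and h₂ : ℝ^d → ℝ^d be continuously differentiable. Define the matrix field 𝔸 = Dh₂ · A_{h₁} + A_{h₁} · Dh₂ᵀ − (div h₂) A_{h₁} − (A_{h₁})'(h₂), where (A_{h₁})'(h₂)(x) is the matrix whose (k,l) entry is ⟨∇((A_{h₁})_{k,l})(x), h₂(x)⟩, and the vector field b = ⟨h₂, ∇u⟩ A_{h₁}∇v + ⟨h₂, ∇v⟩ A_{h₁}∇u − ⟨A_{h₁}∇u, ∇v⟩ h₂. Then for every x ∈ ℝ^d, ⟨∇u(x), 𝔸(x) ∇v(x)⟩ = div b(x) − ⟨h₂(x), ∇u(x)⟩ · div(A_{h₁}∇v)(x) − ⟨h₂(x), ∇v(x)⟩ · div(A_{h₁}∇u)(x). -/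
open scoped RealInnerProductSpace

noncomputable section

abbrev E (d : ℕ) := EuclideanSpace ℝ (Fin d)

/-- Divergence of a vector field: trace of its Jacobian (Fréchet derivative). -/
def vdiv {d : ℕ} (V : E d → E d) (x : E d) : ℝ :=
  LinearMap.trace ℝ (E d) (fderiv ℝ V x).toLinearMap

/-- `A_h(x) = Dh(x) + Dh(x)ᵀ − (div h(x)) I`. -/
def Amat {d : ℕ} (h : E d → E d) (x : E d) : E d →L[ℝ] E d :=
  fderiv ℝ h x + ContinuousLinearMap.adjoint (fderiv ℝ h x) -
    vdiv h x • ContinuousLinearMap.id ℝ (E d)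

/-- `𝔸 = Dh₂ · A_{h₁} + A_{h₁} · Dh₂ᵀ − (div h₂) A_{h₁} − (A_{h₁})'(h₂)`, where the last term
is the derivative of the matrix field `y ↦ A_{h₁}(y)` at `x` in the direction `h₂(x)`
(entrywise, its (k,l) entry is `⟨∇((A_{h₁})_{k,l})(x), h₂(x)⟩`). -/
def AAmat {d : ℕ} (h₁ h₂ : E d → E d) (x : E d) : E d →L[ℝ] E d :=
  (fderiv ℝ h₂ x).comp (Amat h₁ x)
    + (Amat h₁ x).comp (ContinuousLinearMap.adjoint (fderiv ℝ h₂ x))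
    - vdiv h₂ x • Amat h₁ x
    - fderiv ℝ (fun y => Amat h₁ y) x (h₂ x)

/-- `b = ⟨h₂, ∇u⟩ A_{h₁}∇v + ⟨h₂, ∇v⟩ A_{h₁}∇u − ⟨A_{h₁}∇u, ∇v⟩ h₂`. -/
def bfield {d : ℕ} (u v : E d → ℝ) (h₁ h₂ : E d → E d) (y : E d) : E d :=
  ⟪h₂ y, gradient u y⟫ • Amat h₁ y (gradient v y)
    + ⟪h₂ y, gradient v y⟫ • Amat h₁ y (gradient u y)
    - ⟪Amat h₁ y (gradient u y), gradient v y⟫ • h₂ y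

/-!
Expanding `div b` by the product rule `div (f V) = ⟨∇f, V⟩ + f div V` produces the two
subtracted terms `⟨h₂, ∇u⟩ div (A∇v)` and `⟨h₂, ∇v⟩ div (A∇u)` verbatim. In the remaining
first-order terms the second derivatives of `u` and `v` cancel in pairs, because the Hessians,
`A_{h₁}` and its directional derivative `(A_{h₁})'(h₂)` are all symmetric; what is left is
`⟨∇u, 𝔸 ∇v⟩` after moving `Dh₂` and `A_{h₁}` across the inner product.
-/

open InnerProductSpace ContinuousLinearMap

section

variable {F H : Type*} [NormedAddCommGroup F] [NormedSpace ℝ F]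
  [NormedAddCommGroup H] [InnerProductSpace ℝ H] [CompleteSpace H]

theorem isSelfAdjoint_fderiv_apply {A : F → H →L[ℝ] H} (hA : ∀ y, IsSelfAdjoint (A y))
    (x ξ : F) : IsSelfAdjoint (fderiv ℝ A x ξ) := by
  have hA' : A = ⇑(adjoint : (H →L[ℝ] H) ≃ₗᵢ[ℝ] (H →L[ℝ] H)) ∘ A :=
    funext fun y => (hA y).symm
  show adjoint (fderiv ℝ A x ξ) = fderiv ℝ A x ξ
  conv_rhs => rw [hA', LinearIsometryEquiv.comp_fderiv]
  rfl

end

section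

variable {F : Type*} [NormedAddCommGroup F] [InnerProductSpace ℝ F] [CompleteSpace F]
  {u : F → ℝ} {x : F}

theorem fderiv_gradient_apply (ξ : F) :
    fderiv ℝ (gradient u) x ξ = (toDual ℝ F).symm (fderiv ℝ (fderiv ℝ u) x ξ) := by
  rw [show gradient u = (toDual ℝ F).symm ∘ fderiv ℝ u from rfl, LinearIsometryEquiv.comp_fderiv]
  rfl

theorem ContDiff.gradient {n : WithTop ℕ∞} (hu : ContDiff ℝ (n + 1) u) :
    ContDiff ℝ n (gradient u) :=
  (toDual ℝ F).symm.toContinuousLinearEquiv.contDiff.comp (hu.fderiv_right le_rfl)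

theorem isSelfAdjoint_fderiv_gradient (hu : ContDiffAt ℝ 2 u x) :
    IsSelfAdjoint (fderiv ℝ (gradient u) x) := by
  refine LinearMap.IsSymmetric.isSelfAdjoint fun ξ η => ?_
  rw [coe_coe, fderiv_gradient_apply, fderiv_gradient_apply, toDual_symm_apply, real_inner_comm,
    toDual_symm_apply]
  exact hu.isSymmSndFDerivAt (by simp) ξ η

end

section

variable {d : ℕ}

theorem vdiv_add {V W : E d → E d} {x : E d} (hV : DifferentiableAt ℝ V x)
    (hW : DifferentiableAt ℝ W x) :
    vdiv (fun y => V y + W y) x = vdiv V x + vdiv W x := by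
  simp only [vdiv, fderiv_fun_add hV hW, toLinearMap_add, map_add]

theorem vdiv_sub {V W : E d → E d} {x : E d} (hV : DifferentiableAt ℝ V x)
    (hW : DifferentiableAt ℝ W x) :
    vdiv (fun y => V y - W y) x = vdiv V x - vdiv W x := by
  simp only [vdiv, fderiv_fun_sub hV hW, toLinearMap_sub, map_sub]

theorem vdiv_smul {f : E d → ℝ} {V : E d → E d} {x : E d} (hf : DifferentiableAt ℝ f x)
    (hV : DifferentiableAt ℝ V x) :
    vdiv (fun y => f y • V y) x = fderiv ℝ f x (V x) + f x * vdiv V x := by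
  rw [vdiv, vdiv, fderiv_fun_smul hf hV, add_comm, toLinearMap_add, toLinearMap_smul, map_add,
    map_smul, smul_eq_mul]
  congr 1
  exact LinearMap.trace_smulRight (fderiv ℝ f x : E d →ₗ[ℝ] ℝ) (V x)

theorem DifferentiableAt.vdiv {h : E d → E d} {x : E d}
    (hh : DifferentiableAt ℝ (fderiv ℝ h) x) : DifferentiableAt ℝ (vdiv h) x :=
  (LinearMap.toContinuousLinearMap
    ((LinearMap.trace ℝ (E d)).comp (coeLM ℝ))).differentiableAt.comp x hh

theorem DifferentiableAt.Amat {h : E d → E d} {x : E d}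
    (hh : DifferentiableAt ℝ (fderiv ℝ h) x) : DifferentiableAt ℝ (fun y => Amat h y) x :=
  (hh.add ((adjoint : (E d →L[ℝ] E d) ≃ₗᵢ[ℝ] (E d →L[ℝ] E d)).differentiableAt.comp x hh)).sub
    (hh.vdiv.smul_const _)

theorem isSelfAdjoint_Amat (h : E d → E d) (x : E d) : IsSelfAdjoint (Amat h x) := by
  rw [IsSelfAdjoint, star_eq_adjoint, Amat, map_sub, map_add, map_smul, adjoint_adjoint, adjoint_id]
  abel

variable {u v : E d → ℝ} {h₁ h₂ : E d → E d} {x : E d}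

theorem vdiv_bfield (dh₂ : DifferentiableAt ℝ h₂ x) (dgu : DifferentiableAt ℝ (gradient u) x)
    (dgv : DifferentiableAt ℝ (gradient v) x) (dA : DifferentiableAt ℝ (fun y => Amat h₁ y) x) :
    vdiv (bfield u v h₁ h₂) x =
      fderiv ℝ (fun y => ⟪h₂ y, gradient u y⟫) x (Amat h₁ x (gradient v x))
      + fderiv ℝ (fun y => ⟪h₂ y, gradient v y⟫) x (Amat h₁ x (gradient u x))
      - fderiv ℝ (fun y => ⟪Amat h₁ y (gradient u y), gradient v y⟫) x (h₂ x)
      - ⟪Amat h₁ x (gradient u x), gradient v x⟫ * vdiv h₂ x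
      + ⟪h₂ x, gradient u x⟫ * vdiv (fun y => Amat h₁ y (gradient v y)) x
      + ⟪h₂ x, gradient v x⟫ * vdiv (fun y => Amat h₁ y (gradient u y)) x := by
  have dAv := dA.clm_apply dgv
  have dAu := dA.clm_apply dgu
  have dhu := dh₂.inner ℝ dgu
  have dhv := dh₂.inner ℝ dgv
  have dAuv := dAu.inner ℝ dgv
  unfold bfield
  rw [vdiv_sub ((dhu.fun_smul dAv).fun_add (dhv.fun_smul dAu)) (dAuv.fun_smul dh₂),
    vdiv_add (dhu.fun_smul dAv) (dhv.fun_smul dAu), vdiv_smul dhu dAv, vdiv_smul dhv dAu,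
    vdiv_smul dAuv dh₂]
  ring

theorem inner_gradient_AAmat_gradient (dh₂ : DifferentiableAt ℝ h₂ x)
    (dgu : DifferentiableAt ℝ (gradient u) x) (dgv : DifferentiableAt ℝ (gradient v) x)
    (dA : DifferentiableAt ℝ (fun y => Amat h₁ y) x)
    (hHu : IsSelfAdjoint (fderiv ℝ (gradient u) x))
    (hHv : IsSelfAdjoint (fderiv ℝ (gradient v) x)) :
    ⟪gradient u x, AAmat h₁ h₂ x (gradient v x)⟫ =
      fderiv ℝ (fun y => ⟪h₂ y, gradient u y⟫) x (Amat h₁ x (gradient v x))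
      + fderiv ℝ (fun y => ⟪h₂ y, gradient v y⟫) x (Amat h₁ x (gradient u x))
      - fderiv ℝ (fun y => ⟪Amat h₁ y (gradient u y), gradient v y⟫) x (h₂ x)
      - ⟪Amat h₁ x (gradient u x), gradient v x⟫ * vdiv h₂ x := by
  rw [fderiv_inner_apply ℝ dh₂ dgu, fderiv_inner_apply ℝ dh₂ dgv,
    fderiv_inner_apply ℝ (dA.clm_apply dgu) dgv, fderiv_clm_apply dA dgu]
  simp only [AAmat, sub_apply, add_apply, coe_comp, Function.comp_apply, smul_apply, flip_apply,
    inner_sub_right, inner_add_right, inner_add_left, real_inner_smul_right]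
  set g := gradient u x
  set w := gradient v x
  set A := Amat h₁ x
  have hA : ∀ a b, ⟪A a, b⟫ = ⟪a, A b⟫ := (isSelfAdjoint_Amat h₁ x).isSymmetric
  have hA' : ∀ a b, ⟪fderiv ℝ (fun y => Amat h₁ y) x (h₂ x) a, b⟫ =
      ⟪a, fderiv ℝ (fun y => Amat h₁ y) x (h₂ x) b⟫ :=
    (isSelfAdjoint_fderiv_apply (isSelfAdjoint_Amat h₁) x (h₂ x)).isSymmetric
  have hu : ∀ a b, ⟪fderiv ℝ (gradient u) x a, b⟫ = ⟪a, fderiv ℝ (gradient u) x b⟫ :=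
    hHu.isSymmetric
  have hv : ∀ a b, ⟪fderiv ℝ (gradient v) x a, b⟫ = ⟪a, fderiv ℝ (gradient v) x b⟫ :=
    hHv.isSymmetric
  rw [← hA g (adjoint _ w), adjoint_inner_right, ← hA g w, ← hA', ← hu, ← hv, real_inner_comm g,
    hA (fderiv ℝ (gradient u) x (h₂ x)) w, real_inner_comm (fderiv ℝ (gradient v) x (h₂ x))]
  ring

end

theorem statement1 {d : ℕ} (u v : E d → ℝ) (h₁ h₂ : E d → E d)
    (hu : ContDiff ℝ 2 u) (hv : ContDiff ℝ 2 v)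
    (hh₁ : ContDiff ℝ 2 h₁) (hh₂ : ContDiff ℝ 1 h₂)
    (x : E d) :
    ⟪gradient u x, AAmat h₁ h₂ x (gradient v x)⟫ =
      vdiv (bfield u v h₁ h₂) x
      - ⟪h₂ x, gradient u x⟫ * vdiv (fun y => Amat h₁ y (gradient v y)) x
      - ⟪h₂ x, gradient v x⟫ * vdiv (fun y => Amat h₁ y (gradient u y)) x := by
  have dh₂ : DifferentiableAt ℝ h₂ x := hh₂.differentiable one_ne_zero x
  have dgu : DifferentiableAt ℝ (gradient u) x :=
    (hu.gradient (n := 1)).differentiable one_ne_zero x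
  have dgv : DifferentiableAt ℝ (gradient v) x :=
    (hv.gradient (n := 1)).differentiable one_ne_zero x
  have dA : DifferentiableAt ℝ (fun y => Amat h₁ y) x :=
    DifferentiableAt.Amat ((hh₁.fderiv_right (m := 1) le_rfl).differentiable one_ne_zero x)
  rw [vdiv_bfield dh₂ dgu dgv dA, inner_gradient_AAmat_gradient dh₂ dgu dgv dA
    (isSelfAdjoint_fderiv_gradient hu.contDiffAt) (isSelfAdjoint_fderiv_gradient hv.contDiffAt)]
  ring
end
end

section
/- Let M be a d×d real matrix and let n ∈ ℝ^d be a unit vector. Then the matrix-valued function B : t ↦ ((I + tM)⁻¹ ((I + tM)⁻¹)ᵀ) / ‖((I + tM)⁻¹)ᵀ n‖² (defined for all t small enough that I + tM is invertible) has derivative at t = 0 equal to B'(0) = 2⟨M n, n⟩ I − (M + Mᵀ). (With M = Dh(x) the Jacobian of a C¹ deformation field h at a boundary point x with unit normal n, this is the derivative of the matrix B(t) = D(T_t⁻¹) D(T_t⁻¹)ᵀ / ‖(D T_t⁻¹)ᵀ n‖², transported to x, for the perturbation T_t = Id + t h.) -/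
/-!
With `R t = (1 + t • M)⁻¹` we have `R 0 = 1` and `R' 0 = -M`, so the product rule gives
`(R Rᵀ)' 0 = -(M + Mᵀ)`. The normalising factor `g t = ‖Rᵀ n‖²` has `g 0 = ‖n‖² = 1` and
`g' 0 = 2 ⟪n, -Mᵀ n⟫ = -2 ⟪M n, n⟫`, hence `(g⁻¹)' 0 = 2 ⟪M n, n⟫`, and
`B' 0 = (g⁻¹)' 0 • 1 + (R Rᵀ)' 0`.
-/

open scoped RealInnerProductSpace
open Matrix

noncomputable section

/-- `B(t) = ((I + tM)⁻¹ ((I + tM)⁻¹)ᵀ) / ‖((I + tM)⁻¹)ᵀ n‖²`. -/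
def Bmat {d : ℕ} (M : Matrix (Fin d) (Fin d) ℝ) (n : EuclideanSpace ℝ (Fin d)) (t : ℝ) :
    Matrix (Fin d) (Fin d) ℝ :=
  (‖Matrix.toEuclideanLin ((((1 : Matrix (Fin d) (Fin d) ℝ) + t • M)⁻¹)ᵀ) n‖ ^ 2)⁻¹ •
    (((1 : Matrix (Fin d) (Fin d) ℝ) + t • M)⁻¹ *
      (((1 : Matrix (Fin d) (Fin d) ℝ) + t • M)⁻¹)ᵀ)

-- All norms on matrices give the same derivatives; the `L∞` operator norm is chosen because it
-- makes square matrices a normed algebra, which the derivative of inversion requires.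
attribute [local instance] Matrix.linftyOpNormedAddCommGroup Matrix.linftyOpNormedSpace
  Matrix.linftyOpNormedRing Matrix.linftyOpNormedAlgebra

theorem hasDerivAt_ringInverse_one_add_smul {𝕜 A : Type*} [NontriviallyNormedField 𝕜]
    [NormedRing A] [HasSummableGeomSeries A] [NormedAlgebra 𝕜 A] (a : A) :
    HasDerivAt (fun t : 𝕜 => Ring.inverse (1 + t • a)) (-a) 0 := by
  have hline : HasDerivAt (fun t : 𝕜 => 1 + t • a) a 0 := by
    simpa using ((hasDerivAt_id (0 : 𝕜)).smul_const a).const_add 1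
  have hinv : HasFDerivAt Ring.inverse
      (-ContinuousLinearMap.mulLeftRight 𝕜 A 1 1) (1 + (0 : 𝕜) • a) := by
    simpa using hasFDerivAt_ringInverse (𝕜 := 𝕜) (1 : Aˣ)
  simpa [Function.comp_def] using hinv.comp_hasDerivAt (0 : 𝕜) hline

namespace Matrix

variable {𝕜 : Type*} [RCLike 𝕜]

section Rectangular

variable {m n : Type*} [Fintype m] [Fintype n] {f : 𝕜 → Matrix m n 𝕜} {f' : Matrix m n 𝕜} {x : 𝕜}

theorem _root_.HasDerivAt.matrix_elem (hf : HasDerivAt f f' x) (i : m) (j : n) :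
    HasDerivAt (fun t => f t i j) (f' i j) x :=
  (entryLinearMap 𝕜 𝕜 i j).toContinuousLinearMap.hasFDerivAt.comp_hasDerivAt x hf

theorem _root_.HasDerivAt.matrix_transpose (hf : HasDerivAt f f' x) :
    HasDerivAt (fun t => (f t)ᵀ) f'ᵀ x :=
  (transposeLinearEquiv m n 𝕜 𝕜).toLinearMap.toContinuousLinearMap.hasFDerivAt.comp_hasDerivAt
    x hf

theorem _root_.HasDerivAt.toEuclideanLin_apply [DecidableEq n] (hf : HasDerivAt f f' x)
    (v : EuclideanSpace 𝕜 n) :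
    HasDerivAt (fun t => toEuclideanLin (f t) v) (toEuclideanLin f' v) x := by
  let evalAt : Matrix m n 𝕜 →L[𝕜] EuclideanSpace 𝕜 m :=
    (LinearMap.applyₗ v ∘ₗ toEuclideanLin.toLinearMap).toContinuousLinearMap
  exact evalAt.hasFDerivAt.comp_hasDerivAt x hf

end Rectangular

variable {ι : Type*} [Fintype ι] [DecidableEq ι]

theorem hasDerivAt_inv_one_add_smul (M : Matrix ι ι 𝕜) :
    HasDerivAt (fun t : 𝕜 => (1 + t • M)⁻¹) (-M) 0 := by
  have h := hasDerivAt_ringInverse_one_add_smul (𝕜 := 𝕜) M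
  simp only [← nonsing_inv_eq_ringInverse] at h
  exact h

theorem hasDerivAt_inv_one_add_smul_mul_transpose (M : Matrix ι ι 𝕜) :
    HasDerivAt (fun t : 𝕜 => (1 + t • M)⁻¹ * ((1 + t • M)⁻¹)ᵀ) (-(M + Mᵀ)) 0 := by
  have hR := hasDerivAt_inv_one_add_smul M
  refine (hR.mul hR.matrix_transpose).congr_deriv ?_
  simp
  abel

theorem inner_toEuclideanLin_transpose (M : Matrix ι ι ℝ) (u v : EuclideanSpace ℝ ι) :
    ⟪u, toEuclideanLin Mᵀ v⟫ = ⟪toEuclideanLin M u, v⟫ := by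
  rw [← conjTranspose_eq_transpose_of_trivial, toEuclideanLin_conjTranspose_eq_adjoint,
    LinearMap.adjoint_inner_right]

theorem hasDerivAt_norm_sq_toEuclideanLin_inv_one_add_smul_transpose (M : Matrix ι ι ℝ)
    (n : EuclideanSpace ℝ ι) :
    HasDerivAt (fun t : ℝ => ‖toEuclideanLin ((1 + t • M)⁻¹)ᵀ n‖ ^ 2)
      (-(2 * ⟪toEuclideanLin M n, n⟫)) 0 := by
  refine ((hasDerivAt_inv_one_add_smul M).matrix_transpose.toEuclideanLin_apply n).norm_sq
    |>.congr_deriv ?_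
  simp [inner_toEuclideanLin_transpose]

end Matrix

theorem hasDerivAt_Bmat_zero {d : ℕ} (M : Matrix (Fin d) (Fin d) ℝ)
    {n : EuclideanSpace ℝ (Fin d)} (hn : ‖n‖ = 1) :
    HasDerivAt (Bmat M n) ((2 * ⟪toEuclideanLin M n, n⟫) • 1 - (M + Mᵀ)) 0 := by
  have hscale := (hasDerivAt_norm_sq_toEuclideanLin_inv_one_add_smul_transpose M n).inv
    (by simp [hn])
  refine (hscale.smul (hasDerivAt_inv_one_add_smul_mul_transpose M)).congr_deriv ?_
  simp [hn]
  abel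

/-- Entrywise derivative at `t = 0`: `B'(0) = 2⟨M n, n⟩ I − (M + Mᵀ)`. -/
theorem statement4 {d : ℕ} (M : Matrix (Fin d) (Fin d) ℝ)
    (n : EuclideanSpace ℝ (Fin d)) (hn : ‖n‖ = 1) (k l : Fin d) :
    HasDerivAt (fun t : ℝ => Bmat M n t k l)
      (((2 * ⟪Matrix.toEuclideanLin M n, n⟫) • (1 : Matrix (Fin d) (Fin d) ℝ) - (M + Mᵀ)) k l)
      0 :=
  (hasDerivAt_Bmat_zero M hn).matrix_elem k l
end
end
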